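/- arXiv:1702.05351 — 5 statements merged into one kernel-verified Lean document; each statement's English description precedes it below -/
import Mathlib

section
/- Let a, b be real numbers with b ≠ 0, let ψ : ℝ² → ℝ be twice continuously differentiable near the origin with ψ(0,0) = 0 and ψ_u(0,0) = ψ_v(0,0) = 0, and set λ₁ = −(1/2)·[ψ_uu(0,0) − 2·(a/b)·ψ_uv(0,0) + (a/b)²·ψ_vv(0,0)]. Suppose φ : ℝ → ℝ is twice continuously differentiable near 0 with φ(0) = 0 and b·φ(u) + b·ψ(u, (φ(u) − a·u)/b) = 0 for all u near 0, and suppose h : ℝ → ℝ satisfies h(u) = λ₁·u² + O(|u|³) as u → 0. Then h(u) − φ(u) = o(u²) as u → 0; in particular, if λ₁ ≠ 0, then lim_{u→0} h(u)/φ(u) = 1. -/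
/-!
Writing the root equation as `φ u = -ψ (γ u)` along the curve `γ u = (u, (φ u - a u) / b)`, the
chain rule gives `φ'(0) = -Dψ(0)(γ'(0)) = 0`, and differentiating once more
`φ''(0) = -D²ψ(0)(γ'(0), γ'(0)) = 2 λ₁` with `γ'(0) = (1, -a/b)`: the term `Dψ(0)(γ''(0))`, which
contains the unknown `φ''(0)`, vanishes. Peano's form of Taylor's theorem then gives
`φ u = λ₁ u² + o(u²)`, while `h u = λ₁ u² + O(|u|³)`; subtracting gives the first claim, and for
`λ₁ ≠ 0` both `h` and `φ` are asymptotically equivalent to `λ₁ u²`.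
-/

open Topology Asymptotics Filter

section

variable {E F : Type*} [NormedAddCommGroup E] [NormedSpace ℝ E]
  [NormedAddCommGroup F] [NormedSpace ℝ F]

theorem isLittleO_sub_taylor_two_of_hasDerivAt_deriv {f : ℝ → E} {x₀ : ℝ} {c : E}
    (hf : ∀ᶠ x in 𝓝 x₀, DifferentiableAt ℝ f x) (hf' : HasDerivAt (deriv f) c x₀) :
    (fun x => f x - f x₀ - (x - x₀) • deriv f x₀ - ((x - x₀) ^ 2 / 2) • c) =o[𝓝 x₀]
      fun x => (x - x₀) ^ 2 := by
  obtain ⟨ε, hε, hball⟩ := Metric.eventually_nhds_iff_ball.mp hf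
  have hs : 𝓝[Metric.ball x₀ ε] x₀ = 𝓝 x₀ := nhdsWithin_eq_nhds.2 (Metric.ball_mem_nhds x₀ hε)
  have hsucc := (convex_ball x₀ ε).isLittleO_pow_succ_real (Metric.mem_ball_self hε) (n := 1)
    (f := fun x => f x - f x₀ - (x - x₀) • deriv f x₀ - ((x - x₀) ^ 2 / 2) • c)
    (f' := fun x => deriv f x - deriv f x₀ - (x - x₀) • c) ?_ ?_
  · rw [hs] at hsucc
    simpa using hsucc
  · intro x hx
    have hx₀ : HasDerivAt (fun x : ℝ => x - x₀) 1 x := (hasDerivAt_id x).sub_const x₀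
    refine ((((hball x hx).hasDerivAt.sub_const (f x₀)).sub (hx₀.smul_const (deriv f x₀))).sub
      ((hx₀.pow 2).div_const 2 |>.smul_const c)).hasDerivWithinAt.congr_deriv ?_
    simp
  · rw [hs]
    simpa using hf'.isLittleO

theorem hasDerivAt_deriv_comp {ψ : E → F} {γ γ' : ℝ → E} {γ'' : E} {x : ℝ}
    (hψ : ∀ᶠ y in 𝓝 (γ x), DifferentiableAt ℝ ψ y)
    (hψ' : DifferentiableAt ℝ (fderiv ℝ ψ) (γ x))
    (hγ : ∀ᶠ t in 𝓝 x, HasDerivAt γ (γ' t) t) (hγ' : HasDerivAt γ' γ'' x) :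
    HasDerivAt (deriv (ψ ∘ γ))
      (fderiv ℝ (fderiv ℝ ψ) (γ x) (γ' x) (γ' x) + fderiv ℝ ψ (γ x) γ'') x := by
  have hψγ : ∀ᶠ t in 𝓝 x, DifferentiableAt ℝ ψ (γ t) :=
    hγ.self_of_nhds.continuousAt.eventually hψ
  have hderiv : deriv (ψ ∘ γ) =ᶠ[𝓝 x] fun t => fderiv ℝ ψ (γ t) (γ' t) := by
    filter_upwards [hψγ, hγ] with t hψt hγt
    exact (hψt.hasFDerivAt.comp_hasDerivAt t hγt).deriv
  exact ((hψ'.hasFDerivAt.comp_hasDerivAt x hγ.self_of_nhds).clm_apply hγ').congr_of_eventuallyEq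
    hderiv

theorem fderiv_fderiv_apply_of_differentiableAt {ψ : E → F} {p : E}
    (h : DifferentiableAt ℝ (fderiv ℝ ψ) p) (v w : E) :
    fderiv ℝ (fun q => fderiv ℝ ψ q w) p v = fderiv ℝ (fderiv ℝ ψ) p v w := by
  rw [fderiv_clm_apply h (differentiableAt_const w)]
  simp

end

theorem ContDiffAt.fderiv_fderiv_apply_mk_one_mk_one {ψ : ℝ × ℝ → ℝ} {p : ℝ × ℝ}
    (hψ : ContDiffAt ℝ 2 ψ p) (t : ℝ) :
    fderiv ℝ (fderiv ℝ ψ) p (1, t) (1, t) =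
      fderiv ℝ (fun q => fderiv ℝ ψ q (1, 0)) p (1, 0)
        + 2 * t * fderiv ℝ (fun q => fderiv ℝ ψ q (1, 0)) p (0, 1)
        + t ^ 2 * fderiv ℝ (fun q => fderiv ℝ ψ q (0, 1)) p (0, 1) := by
  have hd : DifferentiableAt ℝ (fderiv ℝ ψ) p :=
    (hψ.fderiv_right (m := 1) le_rfl).differentiableAt one_ne_zero
  have hsymm := hψ.isSymmSndFDerivAt (by simp [minSmoothness_of_isRCLikeNormedField])
  have hsplit : ((1 : ℝ), t) = ((1 : ℝ), (0 : ℝ)) + t • ((0 : ℝ), (1 : ℝ)) := by simp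
  simp only [fderiv_fderiv_apply_of_differentiableAt hd]
  rw [hsplit]
  simp only [map_add, map_smul, add_apply, smul_apply, smul_eq_mul, hsymm (0, 1) (1, 0)]
  ring

theorem ContinuousLinearMap.eq_zero_of_apply_mk {𝕜 M : Type*} [Semiring 𝕜] [TopologicalSpace 𝕜]
    [AddCommMonoid M] [TopologicalSpace M] [Module 𝕜 M] {L : 𝕜 × 𝕜 →L[𝕜] M}
    (h₁ : L (1, 0) = 0) (h₂ : L (0, 1) = 0) : L = 0 :=
  prod_ext (ext_ring (by simpa using h₁)) (ext_ring (by simpa using h₂))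

theorem deriv_eq_zero_and_hasDerivAt_deriv_of_root {a b : ℝ} {ψ : ℝ × ℝ → ℝ}
    (hψ : ContDiffAt ℝ 2 ψ (0, 0)) (hψ' : fderiv ℝ ψ (0, 0) = 0) {φ : ℝ → ℝ}
    (hφ : ContDiffAt ℝ 2 φ 0) (hφ0 : φ 0 = 0)
    (hroot : ∀ᶠ u in 𝓝 0, φ u = -ψ (u, (φ u - a * u) / b)) :
    deriv φ 0 = 0 ∧
      HasDerivAt (deriv φ) (-fderiv ℝ (fderiv ℝ ψ) (0, 0) (1, -a / b) (1, -a / b)) 0 := by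
  set γ : ℝ → ℝ × ℝ := fun u => (u, (φ u - a * u) / b)
  have hγ0 : γ 0 = (0, 0) := by simp [γ, hφ0]
  have hφ' : ∀ᶠ u in 𝓝 0, HasDerivAt φ (deriv φ u) u :=
    (hφ.eventually (by simp)).mono fun u hu => (hu.differentiableAt (by simp)).hasDerivAt
  have hγ' : ∀ᶠ u in 𝓝 0, HasDerivAt γ (1, (deriv φ u - a) / b) u :=
    hφ'.mono fun u hu => (hasDerivAt_id u).prodMk <| by
      simpa using (hu.sub ((hasDerivAt_id u).const_mul a)).div_const b
  have hφ'' : HasDerivAt (deriv φ) (deriv (deriv φ) 0) 0 :=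
    ((hφ.derivWithin (m := 1) le_rfl).differentiableAt one_ne_zero).hasDerivAt
  have hγ'' : HasDerivAt (fun u => ((1 : ℝ), (deriv φ u - a) / b)) (0, deriv (deriv φ) 0 / b) 0 :=
    (hasDerivAt_const 0 1).prodMk ((hφ''.sub_const a).div_const b)
  have hψd : ∀ᶠ p in 𝓝 (γ 0), DifferentiableAt ℝ ψ p :=
    hγ0 ▸ (hψ.eventually (by simp)).mono fun p hp => hp.differentiableAt (by simp)
  have hφ'0 : deriv φ 0 = 0 := by
    have := ((hψd.self_of_nhds.hasFDerivAt.comp_hasDerivAt 0 hγ'.self_of_nhds).neg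
      |>.congr_of_eventuallyEq hroot).deriv
    rwa [hγ0, hψ', zero_apply, neg_zero] at this
  refine ⟨hφ'0, ?_⟩
  have hψψ : DifferentiableAt ℝ (fderiv ℝ ψ) (γ 0) :=
    hγ0 ▸ (hψ.fderiv_right (m := 1) le_rfl).differentiableAt one_ne_zero
  have hφγ : φ =ᶠ[𝓝 0] fun u => -(ψ ∘ γ) u := hroot
  have := (hasDerivAt_deriv_comp hψd hψψ hγ' hγ'').neg.congr_of_eventuallyEq
    (hφγ.deriv.trans (Eventually.of_forall fun u => deriv.neg))
  simpa [hγ0, hψ', hφ'0, neg_div] using this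

theorem tendsto_div_of_isLittleO_sub_const_mul {α 𝕜 : Type*} [NormedField 𝕜] {l : Filter α}
    {f g k : α → 𝕜} {c : 𝕜} (hc : c ≠ 0) (hk : ∀ᶠ x in l, k x ≠ 0)
    (hf : (fun x => f x - c * k x) =o[l] k) (hg : (fun x => g x - c * k x) =o[l] k) :
    Tendsto (fun x => f x / g x) l (𝓝 1) := by
  have hf' : f ~[l] fun x => c * k x := hf.const_mul_right' (isUnit_iff_ne_zero.2 hc)
  have hg' : g ~[l] fun x => c * k x := hg.const_mul_right' (isUnit_iff_ne_zero.2 hc)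
  refine (hf'.div hg').symm.tendsto_nhds (tendsto_const_nhds.congr' ?_)
  filter_upwards [hk] with x hx
  simp [hc, hx]

theorem stmt_1_general (a b : ℝ) (hb : b ≠ 0)
    (ψ : ℝ × ℝ → ℝ)
    (hψ : ContDiffAt ℝ 2 ψ (0, 0))
    (hψu : fderiv ℝ ψ (0, 0) (1, 0) = 0)
    (hψv : fderiv ℝ ψ (0, 0) (0, 1) = 0)
    (lam1 : ℝ)
    (hlam1 : lam1 = -(1 / 2) *
      (fderiv ℝ (fun p => fderiv ℝ ψ p (1, 0)) (0, 0) (1, 0)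
        - 2 * (a / b) * fderiv ℝ (fun p => fderiv ℝ ψ p (1, 0)) (0, 0) (0, 1)
        + (a / b) ^ 2 * fderiv ℝ (fun p => fderiv ℝ ψ p (0, 1)) (0, 0) (0, 1)))
    (φ : ℝ → ℝ)
    (hφ : ContDiffAt ℝ 2 φ 0)
    (hφ0 : φ 0 = 0)
    (hroot : ∀ᶠ u in 𝓝 (0 : ℝ),
      b * φ u + b * ψ (u, (φ u - a * u) / b) = 0)
    (h : ℝ → ℝ)
    (hh : (fun u => h u - lam1 * u ^ 2) =O[𝓝 (0 : ℝ)] (fun u => |u| ^ 3)) :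
    (fun u => h u - φ u) =o[𝓝 (0 : ℝ)] (fun u => u ^ 2) ∧
      (lam1 ≠ 0 →
        Tendsto (fun u => h u / φ u) (𝓝[≠] (0 : ℝ)) (𝓝 1)) := by
  have hφψ : ∀ᶠ u in 𝓝 (0 : ℝ), φ u = -ψ (u, (φ u - a * u) / b) :=
    hroot.mono fun u hu => by
      rw [← mul_add, mul_eq_zero, or_iff_right hb] at hu
      linarith
  obtain ⟨hφ'0, hφ''⟩ := deriv_eq_zero_and_hasDerivAt_deriv_of_root hψ
    (ContinuousLinearMap.eq_zero_of_apply_mk hψu hψv) hφ hφ0 hφψ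
  replace hφ'' : HasDerivAt (deriv φ) (2 * lam1) 0 := by
    convert hφ'' using 1
    rw [hψ.fderiv_fderiv_apply_mk_one_mk_one, hlam1]
    ring
  have hφlam : (fun u => φ u - lam1 * u ^ 2) =o[𝓝 0] fun u => u ^ 2 := by
    refine (isLittleO_sub_taylor_two_of_hasDerivAt_deriv
      ((hφ.eventually (by simp)).mono fun u hu => hu.differentiableAt (by simp)) hφ'').congr
      (fun u => ?_) (fun u => by simp)
    simp only [hφ0, hφ'0, sub_zero, smul_eq_mul]
    ring
  have hhlam : (fun u => h u - lam1 * u ^ 2) =o[𝓝 0] fun u => u ^ 2 :=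
    hh.trans_isLittleO <| ((isBigO_refl (fun u : ℝ => u ^ 3) _).norm_left.congr_left
      fun u => by simp).trans_isLittleO (isLittleO_pow_pow (by norm_num))
  refine ⟨(hhlam.sub hφlam).congr_left fun u => by ring, fun hlam => ?_⟩
  exact tendsto_div_of_isLittleO_sub_const_mul hlam
    (eventually_mem_nhdsWithin.mono fun u hu => pow_ne_zero 2 hu)
    (hhlam.mono nhdsWithin_le_nhds) (hφlam.mono nhdsWithin_le_nhds)

/-- The center manifold slice `h(u) = λ₁ u² + O(|u|³)` and the quasi-steady-state root
`φ` are asymptotically equivalent: their difference is `o(u²)`, and if `λ₁ ≠ 0` the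
ratio `h(u)/φ(u)` tends to `1` as `u → 0`. -/
theorem stmt_1 (a b : ℝ) (hb : b ≠ 0)
    (ψ : ℝ × ℝ → ℝ)
    (hψ : ContDiffAt ℝ 2 ψ (0, 0))
    (hψ0 : ψ (0, 0) = 0)
    (hψu : fderiv ℝ ψ (0, 0) (1, 0) = 0)
    (hψv : fderiv ℝ ψ (0, 0) (0, 1) = 0)
    (lam1 : ℝ)
    (hlam1 : lam1 = -(1 / 2) *
      (fderiv ℝ (fun p => fderiv ℝ ψ p (1, 0)) (0, 0) (1, 0)
        - 2 * (a / b) * fderiv ℝ (fun p => fderiv ℝ ψ p (1, 0)) (0, 0) (0, 1)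
        + (a / b) ^ 2 * fderiv ℝ (fun p => fderiv ℝ ψ p (0, 1)) (0, 0) (0, 1)))
    (φ : ℝ → ℝ)
    (hφ : ContDiffAt ℝ 2 φ 0)
    (hφ0 : φ 0 = 0)
    (hroot : ∀ᶠ u in 𝓝 (0 : ℝ),
      b * φ u + b * ψ (u, (φ u - a * u) / b) = 0)
    (h : ℝ → ℝ)
    (hh : (fun u => h u - lam1 * u ^ 2) =O[𝓝 (0 : ℝ)] (fun u => |u| ^ 3)) :
    (fun u => h u - φ u) =o[𝓝 (0 : ℝ)] (fun u => u ^ 2) ∧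
      (lam1 ≠ 0 →
        Tendsto (fun u => h u / φ u) (𝓝[≠] (0 : ℝ)) (𝓝 1)) :=
  stmt_1_general a b hb ψ hψ hψu hψv lam1 hlam1 φ hφ hφ0 hroot h hh
end

section
/- Let a, b be real numbers with b ≠ 0, let Φ : ℝ² → ℝ be continuously differentiable near the origin with Φ(0,0) = 0, and let Ψ : ℝ² → ℝ be twice continuously differentiable near the origin with Ψ(0,0) = 0 and Ψ_u(0,0) = Ψ_v(0,0) = 0. Define λ₁ = −(1/2)·[Ψ_uu(0,0) − 2·(a/b)·Ψ_uv(0,0) + (a/b)²·Ψ_vv(0,0)], λ₂ = −(a/b)·[Φ_u(0,0) − (a/b)·Φ_v(0,0)], and ĥ(u,ε) = λ₁·u² + λ₂·u·ε. Then the invariance residual N(u,ε) := (∂ĥ/∂u)(u,ε)·ε·Φ(u, (ĥ(u,ε) − a·u)/b) − b·ĥ(u,ε) − a·ε·Φ(u, (ĥ(u,ε) − a·u)/b) − b·Ψ(u, (ĥ(u,ε) − a·u)/b) satisfies N(u,ε) = o(u² + ε²) as (u,ε) → (0,0). -/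
/-!
Write `p = (u, ε)`, `m p = (u, (ĥ - a u) / b)` for the point of the candidate manifold
and `n p = u • e` with `e = (1, -a/b)` for its linearisation, so that
`m - n = (0, ĥ / b) = O(‖p‖²)`. The coefficients are exactly `λ₁ = -½ D²Ψ(0)(e, e)` and
`λ₂ = -(a/b) DΦ(0) e`, which turns the residual into
`∂ᵤĥ · ε · Φ(m) - a ε (Φ(m) - DΦ(0) n) - b (Ψ(m) - ½ D²Ψ(0)(n, n))`.
The first term is `O(‖p‖²) · o(1)`; the first-order expansion of `Φ` makes the second
`O(‖p‖) · o(‖p‖)`, and the second-order expansion of `Ψ` at its critical point `0` makes the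
third `o(‖p‖²)`, replacing `m` by `n` costing only `O(‖m - n‖ ‖p‖) = O(‖p‖³)`.
-/

open Topology Asymptotics Filter Metric

theorem fderiv_fderiv_apply_const {𝕜 E F : Type*} [NontriviallyNormedField 𝕜]
    [NormedAddCommGroup E] [NormedSpace 𝕜 E] [NormedAddCommGroup F] [NormedSpace 𝕜 F]
    {f : E → F} {x : E} (hf : DifferentiableAt 𝕜 (fderiv 𝕜 f) x) (v w : E) :
    fderiv 𝕜 (fun y => fderiv 𝕜 f y v) x w = fderiv 𝕜 (fderiv 𝕜 f) x w v := by
  simp [(hf.hasFDerivAt.clm_apply (hasFDerivAt_const v x)).fderiv]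

section

variable {E F : Type*} [NormedAddCommGroup E] [NormedSpace ℝ E]
  [NormedAddCommGroup F] [NormedSpace ℝ F]

theorem isLittleO_sub_sq_of_hasFDerivAt {g : E → F} {g' : E → E →L[ℝ] F} {x : E}
    (hg : ∀ᶠ y in 𝓝 x, HasFDerivAt g (g' y) y) (hg' : g' =o[𝓝 x] fun y => y - x) :
    (fun y => g y - g x) =o[𝓝 x] fun y => ‖y - x‖ ^ 2 := by
  refine isLittleO_iff.2 fun c hc => ?_
  obtain ⟨r, hr, hball⟩ := eventually_nhds_iff_ball.1 (hg.and (isLittleO_iff.1 hg' hc))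
  filter_upwards [ball_mem_nhds x hr] with y hy
  have hsub : closedBall x ‖y - x‖ ⊆ ball x r :=
    closedBall_subset_ball (by rwa [mem_ball, dist_eq_norm] at hy)
  have hmvt := (convex_closedBall x ‖y - x‖).norm_image_sub_le_of_norm_hasFDerivWithin_le
    (C := c * ‖y - x‖) (fun z hz => (hball z (hsub hz)).1.hasFDerivWithinAt)
    (fun z hz => (hball z (hsub hz)).2.trans <| mul_le_mul_of_nonneg_left
      (by rwa [mem_closedBall, dist_eq_norm] at hz) hc.le)
    (mem_closedBall_self (norm_nonneg _)) (show y ∈ _ by simp [dist_eq_norm])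
  rw [norm_pow, norm_norm, pow_two, ← mul_assoc]
  exact hmvt

theorem ContDiffAt.isLittleO_sub_taylor_two {f : E → F} {x : E} (hf : ContDiffAt ℝ 2 f x) :
    (fun y => f y - f x - fderiv ℝ f x (y - x)
        - (2 : ℝ)⁻¹ • fderiv ℝ (fderiv ℝ f) x (y - x) (y - x))
      =o[𝓝 x] fun y => ‖y - x‖ ^ 2 := by
  set Q := fderiv ℝ (fderiv ℝ f) x
  have hsymm : ∀ v w, Q v w = Q w v :=
    hf.isSymmSndFDerivAt (by simp [minSmoothness_of_isRCLikeNormedField])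
  have hQ : HasFDerivAt (fderiv ℝ f) Q x :=
    ((hf.fderiv_right le_rfl).differentiableAt one_ne_zero).hasFDerivAt
  have hquad (y : E) :
      HasFDerivAt (fun z => (2 : ℝ)⁻¹ • Q (z - x) (z - x)) (Q (y - x)) y := by
    have hsub := (hasFDerivAt_id (𝕜 := ℝ) y).sub_const x
    refine ((Q.hasFDerivAt_of_bilinear hsub hsub).const_smul (2 : ℝ)⁻¹).congr_fderiv ?_
    ext v
    simp only [id_eq, ContinuousLinearMap.precompR_apply, ContinuousLinearMap.compL_apply,
      ContinuousLinearMap.comp_id, smul_add, add_apply, smul_apply,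
      ContinuousLinearMap.precompL_apply, ContinuousLinearMap.id_apply, hsymm v]
    module
  have hderiv : ∀ᶠ y in 𝓝 x, HasFDerivAt
      (fun z => f z - fderiv ℝ f x (z - x) - (2 : ℝ)⁻¹ • Q (z - x) (z - x))
      (fderiv ℝ f y - fderiv ℝ f x - Q (y - x)) y := by
    filter_upwards [hf.eventually (by simp)] with y hy
    exact ((hy.differentiableAt two_ne_zero).hasFDerivAt.sub
      ((fderiv ℝ f x).hasFDerivAt.comp y ((hasFDerivAt_id (𝕜 := ℝ) y).sub_const x))).sub
      (hquad y)
  refine (isLittleO_sub_sq_of_hasFDerivAt hderiv hQ.isLittleO).congr_left fun y => ?_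
  simp
  abel

variable {α : Type*} {l : Filter α} {m n : α → E} {g : α → ℝ}

theorem HasFDerivAt.isLittleO_comp_sub_apply {Φ : E → F} {L : E →L[ℝ] F}
    (hΦ : HasFDerivAt Φ L 0)
    (hm : Tendsto m l (𝓝 0)) (hmg : m =O[l] g) (hmn : (m - n) =o[l] g) :
    (fun t => Φ (m t) - Φ 0 - L (n t)) =o[l] g := by
  have hlin : (fun t => Φ (m t) - Φ 0 - L (m t)) =o[l] g := by
    have h := hΦ.isLittleO.comp_tendsto hm
    simp only [Function.comp_def, sub_zero] at h
    exact h.trans_isBigO hmg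
  refine (hlin.add ((L.isBigO_comp _ l).trans_isLittleO hmn)).congr_left fun t => ?_
  simp

theorem ContDiffAt.isLittleO_comp_sub_quadratic_of_fderiv_eq_zero {Ψ : E → F}
    (hΨ : ContDiffAt ℝ 2 Ψ 0) (hcrit : fderiv ℝ Ψ 0 = 0)
    (hm : Tendsto m l (𝓝 0)) (hmg : m =O[l] g) (hmn : (m - n) =o[l] g) :
    (fun t => Ψ (m t) - Ψ 0 - (2 : ℝ)⁻¹ • fderiv ℝ (fderiv ℝ Ψ) 0 (n t) (n t))
      =o[l] fun t => g t ^ 2 := by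
  set Q := fderiv ℝ (fderiv ℝ Ψ) 0
  have hquad :
      (fun t => Ψ (m t) - Ψ 0 - (2 : ℝ)⁻¹ • Q (m t) (m t)) =o[l] fun t => g t ^ 2 := by
    have h := hΨ.isLittleO_sub_taylor_two.comp_tendsto hm
    simp only [Function.comp_def, sub_zero, hcrit, zero_apply] at h
    exact h.trans_isBigO (hmg.norm_left.pow 2)
  have hng : n =O[l] g := by simpa using hmg.sub hmn.isBigO
  have hbil : (fun t => Q (m t) (m t) - Q (n t) (n t)) =o[l] fun t => g t ^ 2 := by
    -- `Q m m - Q n n = Q (m - n) m + Q n (m - n)`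
    have h1 := Q.isBoundedBilinearMap.isBigO_comp.trans_isLittleO
      (hmn.norm_left.mul_isBigO hmg.norm_left)
    have h2 := Q.isBoundedBilinearMap.isBigO_comp.trans_isLittleO
      (hng.norm_left.mul_isLittleO hmn.norm_left)
    refine (h1.add h2).congr (fun t => ?_) (fun t => ?_)
    · simp
    · ring
  refine (hquad.add (hbil.const_smul_left (2 : ℝ)⁻¹)).congr_left fun t => ?_
  simp only [Pi.smul_apply, smul_sub]
  abel

end

theorem ContinuousLinearMap.apply_mk_eq {F : Type*} [NormedAddCommGroup F] [NormedSpace ℝ F]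
    (L : ℝ × ℝ →L[ℝ] F) (x y : ℝ) : L (x, y) = x • L (1, 0) + y • L (0, 1) := by
  rw [← map_smul, ← map_smul, ← map_add]
  simp

theorem ContDiffAt.fderiv_fderiv_apply_one_mk {Ψ : ℝ × ℝ → ℝ} {x : ℝ × ℝ}
    (hΨ : ContDiffAt ℝ 2 Ψ x) (c : ℝ) :
    fderiv ℝ (fderiv ℝ Ψ) x (1, c) (1, c) =
      fderiv ℝ (fun p => fderiv ℝ Ψ p (1, 0)) x (1, 0)
        + 2 * c * fderiv ℝ (fun p => fderiv ℝ Ψ p (1, 0)) x (0, 1)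
        + c ^ 2 * fderiv ℝ (fun p => fderiv ℝ Ψ p (0, 1)) x (0, 1) := by
  set Q := fderiv ℝ (fderiv ℝ Ψ) x
  have hpartial : ∀ v w, fderiv ℝ (fun p => fderiv ℝ Ψ p v) x w = Q w v :=
    fderiv_fderiv_apply_const ((hΨ.fderiv_right le_rfl).differentiableAt one_ne_zero)
  have hsymm : Q (1, 0) (0, 1) = Q (0, 1) (1, 0) :=
    hΨ.isSymmSndFDerivAt (by simp [minSmoothness_of_isRCLikeNormedField]) _ _
  rw [hpartial, hpartial, hpartial, Q.apply_mk_eq 1 c, add_apply, smul_apply, smul_apply,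
    (Q (1, 0)).apply_mk_eq 1 c, (Q (0, 1)).apply_mk_eq 1 c, hsymm]
  simp only [smul_eq_mul]
  ring

theorem isBigO_norm_sq_fst_sq_add_snd_sq (l : Filter (ℝ × ℝ)) :
    (fun p : ℝ × ℝ => ‖p‖ ^ 2) =O[l] fun p => p.1 ^ 2 + p.2 ^ 2 := by
  refine IsBigO.of_bound 1 (Eventually.of_forall fun p => ?_)
  rw [Real.norm_of_nonneg (by positivity), Real.norm_of_nonneg (by positivity), one_mul,
    Prod.norm_def, Real.norm_eq_abs, Real.norm_eq_abs]
  rcases max_cases |p.1| |p.2| with ⟨h, _⟩ | ⟨h, _⟩ <;> rw [h, sq_abs] <;>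
    linarith [sq_nonneg p.1, sq_nonneg p.2]

theorem isBigO_quadratic (c₁ c₂ : ℝ) (l : Filter (ℝ × ℝ)) :
    (fun p : ℝ × ℝ => c₁ * p.1 ^ 2 + c₂ * p.1 * p.2) =O[l] fun p => ‖p‖ ^ 2 := by
  have hfst := (isBigO_fst_prod' (f' := fun p : ℝ × ℝ => p) (l := l)).norm_right
  have hsnd := (isBigO_snd_prod' (f' := fun p : ℝ × ℝ => p) (l := l)).norm_right
  exact (((hfst.mul hfst).const_mul_left c₁).add ((hfst.mul hsnd).const_mul_left c₂)).congr
    (fun p => by ring) fun p => (sq _).symm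

theorem deriv_quadratic (c₁ c₂ ε u : ℝ) :
    deriv (fun x => c₁ * x ^ 2 + c₂ * x * ε) u = 2 * c₁ * u + c₂ * ε := by
  refine (((hasDerivAt_pow 2 u).const_mul c₁).add
    (((hasDerivAt_id' u).const_mul c₂).mul_const ε)).deriv.trans ?_
  norm_num
  ring

-- The point `(u, v)` with `a u + b v = h (u, ε)`: the graph `w = h` in the original coordinates.
noncomputable def graphPoint (a b : ℝ) (h : ℝ × ℝ → ℝ) (p : ℝ × ℝ) : ℝ × ℝ :=
  (p.1, (h p - a * p.1) / b)

section graphPoint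

variable (a b : ℝ) {h : ℝ × ℝ → ℝ}

theorem isBigO_graphPoint (hh : h =O[𝓝 0] fun p => ‖p‖ ^ 2) :
    graphPoint a b h =O[𝓝 0] fun p => ‖p‖ := by
  have hfst := (isBigO_fst_prod' (f' := fun p : ℝ × ℝ => p) (l := 𝓝 0)).norm_right
  have hh' := (hh.trans_isLittleO (isLittleO_norm_pow_id one_lt_two).norm_right).isBigO
  exact (hfst.prod_left ((hh'.sub (hfst.const_mul_left a)).const_mul_left b⁻¹)).congr_left
    fun p => Prod.ext rfl (inv_mul_eq_div _ _)

theorem isLittleO_graphPoint_sub_smul (hh : h =O[𝓝 0] fun p => ‖p‖ ^ 2) :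
    (graphPoint a b h - fun p => p.1 • ((1 : ℝ), -(a / b))) =o[𝓝 0] fun p => ‖p‖ := by
  refine ((isBigO_zero _ _).prod_left (hh.const_mul_left b⁻¹)).trans_isLittleO
    (isLittleO_norm_pow_id one_lt_two).norm_right |>.congr_left fun p => ?_
  simp only [graphPoint, Pi.sub_apply, Prod.smul_mk, smul_eq_mul, Prod.mk_sub_mk]
  congr 1 <;> ring

theorem isLittleO_graphPoint_residual {Φ Ψ : ℝ × ℝ → ℝ} (c₁ c₂ : ℝ)
    (hh : h =O[𝓝 0] fun p => ‖p‖ ^ 2) (hΦ : ContDiffAt ℝ 1 Φ 0) (hΦ0 : Φ 0 = 0)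
    (hΨ : ContDiffAt ℝ 2 Ψ 0) (hcrit : fderiv ℝ Ψ 0 = 0) :
    (fun p : ℝ × ℝ => (c₁ * p.1 + c₂ * p.2) * p.2 * Φ (graphPoint a b h p)
        + -a * p.2 * (Φ (graphPoint a b h p) - Φ 0 - fderiv ℝ Φ 0 (p.1 • (1, -(a / b))))
        + -b * (Ψ (graphPoint a b h p) - Ψ 0 - (2 : ℝ)⁻¹ •
          fderiv ℝ (fderiv ℝ Ψ) 0 (p.1 • (1, -(a / b))) (p.1 • (1, -(a / b)))))
      =o[𝓝 0] fun p => ‖p‖ ^ 2 := by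
  have hfst := (isBigO_fst_prod' (f' := fun p : ℝ × ℝ => p) (l := 𝓝 0)).norm_right
  have hsnd := (isBigO_snd_prod' (f' := fun p : ℝ × ℝ => p) (l := 𝓝 0)).norm_right
  have hmg := isBigO_graphPoint a b hh
  have hmn := isLittleO_graphPoint_sub_smul a b hh
  have hm : Tendsto (graphPoint a b h) (𝓝 0) (𝓝 0) := hmg.trans_tendsto tendsto_norm_zero
  have hΦm : (fun p => Φ (graphPoint a b h p)) =o[𝓝 0] fun _ => (1 : ℝ) :=
    (isLittleO_one_iff ℝ).2 <| by
      simpa [hΦ0, Function.comp_def] using hΦ.continuousAt.tendsto.comp hm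
  have hA := ((((hfst.const_mul_left c₁).add (hsnd.const_mul_left c₂)).mul
    hsnd).mul_isLittleO hΦm).congr_right fun p => mul_one _
  have hB := (hsnd.const_mul_left (-a)).mul_isLittleO
    ((hΦ.differentiableAt one_ne_zero).hasFDerivAt.isLittleO_comp_sub_apply hm hmg hmn)
  have hC := (hΨ.isLittleO_comp_sub_quadratic_of_fderiv_eq_zero hcrit hm hmg hmn).const_mul_left
    (-b)
  exact ((hA.add hB).congr_right fun p => (sq _).symm).add hC

end graphPoint

/-- The second-order polynomial `ĥ(u,ε) = λ₁ u² + λ₂ u ε` annihilates the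
center-manifold invariance residual of the general slow–fast system up to
`o(u² + ε²)` as `(u,ε) → (0,0)`. -/
theorem stmt_2 (a b : ℝ) (hb : b ≠ 0)
    (Φ Ψ : ℝ × ℝ → ℝ)
    (hΦ : ContDiffAt ℝ 1 Φ (0, 0)) (hΦ0 : Φ (0, 0) = 0)
    (hΨ : ContDiffAt ℝ 2 Ψ (0, 0)) (hΨ0 : Ψ (0, 0) = 0)
    (hΨu : fderiv ℝ Ψ (0, 0) (1, 0) = 0)
    (hΨv : fderiv ℝ Ψ (0, 0) (0, 1) = 0)
    (lam1 lam2 : ℝ)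
    (hlam1 : lam1 = -(1 / 2) *
      (fderiv ℝ (fun p => fderiv ℝ Ψ p (1, 0)) (0, 0) (1, 0)
        - 2 * (a / b) * fderiv ℝ (fun p => fderiv ℝ Ψ p (1, 0)) (0, 0) (0, 1)
        + (a / b) ^ 2 * fderiv ℝ (fun p => fderiv ℝ Ψ p (0, 1)) (0, 0) (0, 1)))
    (hlam2 : lam2 = -(a / b) *
      (fderiv ℝ Φ (0, 0) (1, 0) - (a / b) * fderiv ℝ Φ (0, 0) (0, 1)))
    (hhat : ℝ → ℝ → ℝ)
    (hhhat : ∀ u ε, hhat u ε = lam1 * u ^ 2 + lam2 * u * ε)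
    (N : ℝ → ℝ → ℝ)
    (hN : ∀ u ε, N u ε =
      deriv (fun x => hhat x ε) u * (ε * Φ (u, (hhat u ε - a * u) / b))
        - b * hhat u ε
        - a * ε * Φ (u, (hhat u ε - a * u) / b)
        - b * Ψ (u, (hhat u ε - a * u) / b)) :
    (fun p : ℝ × ℝ => N p.1 p.2) =o[𝓝 ((0 : ℝ), (0 : ℝ))]
      (fun p : ℝ × ℝ => p.1 ^ 2 + p.2 ^ 2) := by
  rw [Prod.mk_zero_zero] at *
  set e : ℝ × ℝ := (1, -(a / b)) with he
  have hlam1' : lam1 = -(2 : ℝ)⁻¹ * fderiv ℝ (fderiv ℝ Ψ) 0 e e := by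
    rw [hlam1, he, hΨ.fderiv_fderiv_apply_one_mk]
    ring
  have hlam2' : b * lam2 = -a * fderiv ℝ Φ 0 e := by
    rw [hlam2, he, (fderiv ℝ Φ 0).apply_mk_eq 1 (-(a / b)), one_smul, smul_eq_mul]
    field_simp
    ring
  have hcrit : fderiv ℝ Ψ 0 = 0 :=
    ContinuousLinearMap.ext fun ⟨x, y⟩ => by simp [ContinuousLinearMap.apply_mk_eq, hΨu, hΨv]
  have hhat_O : (fun p : ℝ × ℝ => hhat p.1 p.2) =O[𝓝 0] fun p => ‖p‖ ^ 2 :=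
    (isBigO_quadratic lam1 lam2 _).congr_left fun p => (hhhat p.1 p.2).symm
  calc (fun p : ℝ × ℝ => N p.1 p.2)
      = _ := funext fun p => by
        rw [hN]
        simp only [hhhat, deriv_quadratic, graphPoint, map_smul, smul_apply, smul_eq_mul, hΦ0,
          hΨ0]
        linear_combination (-b * p.1 ^ 2) * hlam1' + (-p.1 * p.2) * hlam2'
    _ =o[𝓝 0] fun p => ‖p‖ ^ 2 :=
      isLittleO_graphPoint_residual a b (2 * lam1) lam2 hhat_O hΦ hΦ0 hΨ hcrit
    _ =O[𝓝 0] fun p => p.1 ^ 2 + p.2 ^ 2 := isBigO_norm_sq_fst_sq_add_snd_sq _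
end

section
/- Let κ, λ > 0, let φ(u,w) = −u + (u + κ − λ)·(u − w)/κ, and let h(u,ε) = u²/κ − (λ/κ²)·u·ε. Then the invariance residual N(u,ε) := (∂h/∂u)(u,ε)·ε·φ(u, h(u,ε)) + κ·h(u,ε) − u·(u − h(u,ε)) − ε·φ(u, h(u,ε)) satisfies: there exists a constant M > 0 such that |N(u,ε)| ≤ M·(|u| + |ε|)³ for all (u,ε) with |u| + |ε| ≤ 1. -/
private lemma mono3 (u ε : ℝ) (h1 : |u| + |ε| ≤ 1) (a b : ℕ) (hab : 3 ≤ a + b) :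
    |u ^ a * ε ^ b| ≤ (|u| + |ε|) ^ 3 := by
  have hu : |u| ≤ |u| + |ε| := le_add_of_nonneg_right (abs_nonneg ε)
  have he : |ε| ≤ |u| + |ε| := le_add_of_nonneg_left (abs_nonneg u)
  have h0 : (0:ℝ) ≤ |u| + |ε| := by positivity
  calc |u ^ a * ε ^ b| = |u| ^ a * |ε| ^ b := by rw [abs_mul, abs_pow, abs_pow]
    _ ≤ (|u| + |ε|) ^ a * (|u| + |ε|) ^ b :=
        mul_le_mul (pow_le_pow_left₀ (abs_nonneg u) hu a)
          (pow_le_pow_left₀ (abs_nonneg ε) he b) (by positivity) (by positivity)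
    _ = (|u| + |ε|) ^ (a + b) := (pow_add _ a b).symm
    _ ≤ (|u| + |ε|) ^ 3 := pow_le_pow_of_le_one h0 h1 hab

private lemma add_bd {x y X Y : ℝ} (hx : |x| ≤ X) (hy : |y| ≤ Y) : |x + y| ≤ X + Y :=
  (abs_add_le x y).trans (add_le_add hx hy)

/-- For the Heineken–Tsuchiya–Aris system, the second-order polynomial
`h(u,ε) = u²/κ − (λ/κ²) u ε` annihilates the center-manifold invariance residual
up to third-order terms. -/
theorem stmt_5 (κ lam : ℝ) (hκ : 0 < κ) (hlam : 0 < lam)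
    (φ : ℝ → ℝ → ℝ)
    (hφ : ∀ u w, φ u w = -u + (u + κ - lam) * (u - w) / κ)
    (h : ℝ → ℝ → ℝ)
    (hh : ∀ u ε, h u ε = u ^ 2 / κ - lam / κ ^ 2 * u * ε)
    (N : ℝ → ℝ → ℝ)
    (hN : ∀ u ε, N u ε =
      deriv (fun x => h x ε) u * (ε * φ u (h u ε)) + κ * h u ε
        - u * (u - h u ε) - ε * φ u (h u ε)) :
    ∃ M > 0, ∀ u ε : ℝ, |u| + |ε| ≤ 1 → |N u ε| ≤ M * (|u| + |ε|) ^ 3 := by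
  have hκ' : κ ≠ 0 := ne_of_gt hκ
  -- coefficients of the expanded residual
  set c1 : ℝ := 2 * lam ^ 2 / κ ^ 3 - lam / κ ^ 2 with hc1
  set c2 : ℝ := lam ^ 3 / κ ^ 5 - lam ^ 2 / κ ^ 4 with hc2
  set c3 : ℝ := -(4 * lam / κ ^ 2) with hc3
  set c4 : ℝ := -(3 * lam ^ 2 / κ ^ 4) + lam / κ ^ 3 with hc4
  set c5 : ℝ := -(lam ^ 2 / κ ^ 5) with hc5
  set c6 : ℝ := 1 / κ with hc6
  set c7 : ℝ := 2 * lam / κ ^ 3 + 1 / κ ^ 2 with hc7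
  set c8 : ℝ := 3 * lam / κ ^ 4 with hc8
  set c9 : ℝ := -(2 / κ ^ 3) with hc9
  refine ⟨|c1| + |c2| + |c3| + |c4| + |c5| + |c6| + |c7| + |c8| + |c9|, ?_, ?_⟩
  · have h6 : 0 < |c6| := abs_pos.mpr (by rw [hc6]; positivity)
    have := abs_nonneg c1; have := abs_nonneg c2; have := abs_nonneg c3
    have := abs_nonneg c4; have := abs_nonneg c5; have := abs_nonneg c7
    have := abs_nonneg c8; have := abs_nonneg c9
    linarith
  intro u ε h1
  -- compute the derivative
  have hfun : (fun x => h x ε) = fun x => x ^ 2 / κ - lam / κ ^ 2 * x * ε :=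
    funext fun x => hh x ε
  have hD : HasDerivAt (fun x => x ^ 2 / κ - lam / κ ^ 2 * x * ε)
      (2 * u / κ - lam / κ ^ 2 * ε) u := by
    have h1' : HasDerivAt (fun x : ℝ => x ^ 2 / κ) (2 * u / κ) u := by
      simpa [mul_comm] using (hasDerivAt_pow 2 u).div_const κ
    have h2' : HasDerivAt (fun x : ℝ => lam / κ ^ 2 * x * ε) (lam / κ ^ 2 * ε) u := by
      simpa [mul_comm, mul_assoc] using
        (((hasDerivAt_id u).const_mul (lam / κ ^ 2)).mul_const ε)
    exact h1'.sub h2'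
  have hderiv : deriv (fun x => h x ε) u = 2 * u / κ - lam / κ ^ 2 * ε := by
    rw [hfun]; exact hD.deriv
  -- explicit polynomial form of the residual
  have Nval : N u ε =
      c1 * (u ^ 1 * ε ^ 2) + c2 * (u ^ 1 * ε ^ 3) + c3 * (u ^ 2 * ε ^ 1)
        + c4 * (u ^ 2 * ε ^ 2) + c5 * (u ^ 2 * ε ^ 3) + c6 * (u ^ 3 * ε ^ 0)
        + c7 * (u ^ 3 * ε ^ 1) + c8 * (u ^ 3 * ε ^ 2) + c9 * (u ^ 4 * ε ^ 1) := by
    rw [hN, hderiv, hφ, hh, hc1, hc2, hc3, hc4, hc5, hc6, hc7, hc8, hc9]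
    field_simp
    ring
  set r : ℝ := |u| + |ε| with hr
  have R3 : ∀ (a b : ℕ), 3 ≤ a + b → |u ^ a * ε ^ b| ≤ r ^ 3 := fun a b hab =>
    mono3 u ε h1 a b hab
  have hr3 : (0:ℝ) ≤ r ^ 3 := by positivity
  have bd : ∀ (c : ℝ) (a b : ℕ), 3 ≤ a + b → |c * (u ^ a * ε ^ b)| ≤ |c| * r ^ 3 := by
    intro c a b hab
    rw [abs_mul]
    exact mul_le_mul_of_nonneg_left (R3 a b hab) (abs_nonneg c)
  rw [Nval]
  calc |c1 * (u ^ 1 * ε ^ 2) + c2 * (u ^ 1 * ε ^ 3) + c3 * (u ^ 2 * ε ^ 1)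
        + c4 * (u ^ 2 * ε ^ 2) + c5 * (u ^ 2 * ε ^ 3) + c6 * (u ^ 3 * ε ^ 0)
        + c7 * (u ^ 3 * ε ^ 1) + c8 * (u ^ 3 * ε ^ 2) + c9 * (u ^ 4 * ε ^ 1)|
      ≤ |c1| * r ^ 3 + |c2| * r ^ 3 + |c3| * r ^ 3 + |c4| * r ^ 3 + |c5| * r ^ 3
        + |c6| * r ^ 3 + |c7| * r ^ 3 + |c8| * r ^ 3 + |c9| * r ^ 3 := by
        refine add_bd (add_bd (add_bd (add_bd (add_bd (add_bd (add_bd (add_bd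
          (bd c1 1 2 (by norm_num)) (bd c2 1 3 (by norm_num))) (bd c3 2 1 (by norm_num)))
          (bd c4 2 2 (by norm_num))) (bd c5 2 3 (by norm_num))) (bd c6 3 0 (by norm_num)))
          (bd c7 3 1 (by norm_num))) (bd c8 3 2 (by norm_num))) (bd c9 4 1 (by norm_num))
    _ = (|c1| + |c2| + |c3| + |c4| + |c5| + |c6| + |c7| + |c8| + |c9|) * r ^ 3 := by ring
end

section
/- Let η, σ, κ_m > 0 and set d = η + κ_m. Define f(u,w,ε) = ε·(w − u)/d, g(u,w,ε) = σ·u·(u − w) + ε·(w − u)/d − η·σ·(u − w)²/d, and h(u,ε) = (σ·κ_m/d²)·u² − (1/d²)·u·ε. Then the invariance residual N(u,ε) := (∂h/∂u)(u,ε)·f(u, h(u,ε), ε) + d·h(u,ε) − g(u, h(u,ε), ε) satisfies: there exists a constant M > 0 such that |N(u,ε)| ≤ M·(|u| + |ε|)³ for all (u,ε) with |u| + |ε| ≤ 1. -/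
/-!
Substituting `w = h(u, ε)` makes the invariance residual an explicit polynomial in `(u, ε)`.
The choice of the two coefficients of `h` kills its quadratic part, so only monomials of total
degree `3` and `4` remain, and on `|u| + |ε| ≤ 1` each of them is bounded by `(|u| + |ε|) ^ 3`.
-/

lemma abs_pow_mul_pow_le_pow_three {u ε : ℝ} (hs : |u| + |ε| ≤ 1) {i j : ℕ} (hij : 3 ≤ i + j) :
    |u ^ i * ε ^ j| ≤ (|u| + |ε|) ^ 3 := by
  have hu : |u| ≤ |u| + |ε| := le_add_of_nonneg_right (abs_nonneg ε)
  have hε : |ε| ≤ |u| + |ε| := le_add_of_nonneg_left (abs_nonneg u)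
  calc |u ^ i * ε ^ j| = |u| ^ i * |ε| ^ j := by rw [abs_mul, abs_pow, abs_pow]
    _ ≤ (|u| + |ε|) ^ i * (|u| + |ε|) ^ j := by gcongr
    _ = (|u| + |ε|) ^ (i + j) := (pow_add _ _ _).symm
    _ ≤ (|u| + |ε|) ^ 3 := pow_le_pow_of_le_one (by positivity) hs hij

lemma abs_sum_monomials_le {ι : Type*} [Fintype ι] (c : ι → ℝ) (i j : ι → ℕ)
    (hij : ∀ k, 3 ≤ i k + j k) {u ε : ℝ} (hs : |u| + |ε| ≤ 1) :
    |∑ k, c k * (u ^ i k * ε ^ j k)| ≤ (∑ k, |c k|) * (|u| + |ε|) ^ 3 := by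
  rw [Finset.sum_mul]
  refine (Finset.abs_sum_le_sum_abs _ _).trans (Finset.sum_le_sum fun k _ => ?_)
  rw [abs_mul]
  exact mul_le_mul_of_nonneg_left (abs_pow_mul_pow_le_pow_three hs (hij k)) (abs_nonneg _)

theorem stmt_9_general (η σ κm : ℝ) (hη : 0 < η) (hκm : 0 < κm)
    (d : ℝ) (hd : d = η + κm)
    (f g : ℝ → ℝ → ℝ → ℝ)
    (hf : ∀ u w ε, f u w ε = ε * (w - u) / d)
    (hg : ∀ u w ε, g u w ε =
      σ * u * (u - w) + ε * (w - u) / d - η * σ * (u - w) ^ 2 / d)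
    (h : ℝ → ℝ → ℝ)
    (hh : ∀ u ε, h u ε = σ * κm / d ^ 2 * u ^ 2 - 1 / d ^ 2 * u * ε)
    (N : ℝ → ℝ → ℝ)
    (hN : ∀ u ε, N u ε =
      deriv (fun x => h x ε) u * f u (h u ε) ε + d * h u ε - g u (h u ε) ε) :
    ∃ M > 0, ∀ u ε : ℝ, |u| + |ε| ≤ 1 → |N u ε| ≤ M * (|u| + |ε|) ^ 3 := by
  have hd0 : d ≠ 0 := by rw [hd]; positivity
  let c : Fin 7 → ℝ := ![σ ^ 2 * κm * (κm - η) / d ^ 3, σ * (η - 4 * κm) / d ^ 3, 2 / d ^ 3,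
    η * σ ^ 3 * κm ^ 2 / d ^ 5, 2 * σ ^ 2 * κm * (κm - η) / d ^ 5, σ * (η - 3 * κm) / d ^ 5,
    1 / d ^ 5]
  let i : Fin 7 → ℕ := ![3, 2, 1, 4, 3, 2, 1]
  let j : Fin 7 → ℕ := ![0, 1, 2, 0, 1, 2, 3]
  refine ⟨∑ k, |c k| + 1, by positivity, fun u ε hs => ?_⟩
  have hderiv : HasDerivAt (fun x => h x ε) (2 * (σ * κm / d ^ 2) * u - 1 / d ^ 2 * ε) u := by
    simp only [hh]
    exact (((hasDerivAt_pow 2 u).const_mul _).sub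
      (((hasDerivAt_id u).const_mul _).mul_const ε)).congr_deriv (by norm_num; ring)
  have hresidual : N u ε = ∑ k, c k * (u ^ i k * ε ^ j k) := by
    rw [hN, hderiv.deriv, hf, hg, hh]
    simp only [Fin.sum_univ_seven, c, i, j, Matrix.cons_val]
    field_simp
    subst hd
    ring
  calc |N u ε| ≤ (∑ k, |c k|) * (|u| + |ε|) ^ 3 := by
        rw [hresidual]; exact abs_sum_monomials_le c i j (by decide) hs
    _ ≤ (∑ k, |c k| + 1) * (|u| + |ε|) ^ 3 := by gcongr; linarith

/-- For the dimensionless tQSSA Michaelis–Menten system, the second-order polynomial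
`h(u,ε) = (σ κₘ/d²) u² − (1/d²) u ε` (with `d = η + κₘ`) annihilates the
center-manifold invariance residual up to third-order terms. -/
theorem stmt_9 (η σ κm : ℝ) (hη : 0 < η) (hσ : 0 < σ) (hκm : 0 < κm)
    (d : ℝ) (hd : d = η + κm)
    (f g : ℝ → ℝ → ℝ → ℝ)
    (hf : ∀ u w ε, f u w ε = ε * (w - u) / d)
    (hg : ∀ u w ε, g u w ε =
      σ * u * (u - w) + ε * (w - u) / d - η * σ * (u - w) ^ 2 / d)
    (h : ℝ → ℝ → ℝ)
    (hh : ∀ u ε, h u ε = σ * κm / d ^ 2 * u ^ 2 - 1 / d ^ 2 * u * ε)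
    (N : ℝ → ℝ → ℝ)
    (hN : ∀ u ε, N u ε =
      deriv (fun x => h x ε) u * f u (h u ε) ε + d * h u ε - g u (h u ε) ε) :
    ∃ M > 0, ∀ u ε : ℝ, |u| + |ε| ≤ 1 → |N u ε| ≤ M * (|u| + |ε|) ^ 3 :=
  stmt_9_general η σ κm hη hκm d hd f g hf hg h hh N hN
end

section
/- Let k₁, k₂, k₋₁, E_T, X_T > 0, and set K = k₂/k₁ and K_M = (k₋₁ + k₂)/k₁. Then the tQSSA perturbation parameter ε = K·E_T/(E_T + K_M + X_T)² satisfies ε < 1/4. -/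
/-- The tQSSA perturbation parameter `ε = K E_T/(E_T + K_M + X_T)²` is always
less than `1/4`, where `K = k₂/k₁` and `K_M = (k₋₁ + k₂)/k₁`. -/
theorem stmt_13 (k1 k2 km1 ET XT : ℝ)
    (hk1 : 0 < k1) (hk2 : 0 < k2) (hkm1 : 0 < km1) (hET : 0 < ET) (hXT : 0 < XT)
    (K KM : ℝ) (hK : K = k2 / k1) (hKM : KM = (km1 + k2) / k1) :
    K * ET / (ET + KM + XT) ^ 2 < 1 / 4 := by
  have hKpos : 0 < K := by rw [hK]; positivity
  have hKM2 : 0 < KM := by rw [hKM]; positivity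
  have hKle : K ≤ KM := by
    rw [hK, hKM]
    gcongr; linarith
  have hden : 0 < (ET + KM + XT) ^ 2 := by positivity
  rw [div_lt_div_iff₀ hden (by norm_num)]
  nlinarith [sq_nonneg (ET - KM), sq_nonneg (ET + KM), mul_pos hET hKM2, sq_nonneg XT]
end
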